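/- Consider N cells indexed i = 1,…,N, with common fluxes f_{1/2}, f_{3/2}, …, f_{N+1/2} ∈ ℝ, where the flux f_{i+1/2} is shared between cells i and i+1. For each cell let F_i : ℝ → ℝ be differentiable on [-1,1] with continuous derivative, and let g₋, g₊ : ℝ → ℝ be differentiable on [-1,1] with continuous derivatives satisfying g₋(-1) = 1, g₋(1) = 0, g₊(-1) = 0, g₊(1) = 1. Then the sum over all cells of the FR residual integrals, ∑_{i=1}^{N} ∫_{-1}^{1} [F_i'(ξ) + (f_{i-1/2} - F_i(-1))·g₋'(ξ) + (f_{i+1/2} - F_i(1))·g₊'(ξ)] dξ, telescopes to f_{N+1/2} - f_{1/2}. In particular, under periodic boundary conditions (f_{N+1/2} = f_{1/2}) this sum vanishes, so the integral of the solution over the entire computational domain is conserved by the semi-discrete FR scheme. -/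

import Mathlib

/-!
By the fundamental theorem of calculus, the residual integral over one cell is
`F(1) - F(-1) + (f_{i-1/2} - F(-1)) (g₋(1) - g₋(-1)) + (f_{i+1/2} - F(1)) (g₊(1) - g₊(-1))`,
and the boundary values of the correction functions cancel the cell's own interface values
`F(±1)`, leaving `f_{i+1/2} - f_{i-1/2}`. Summing over the cells telescopes.
-/

open intervalIntegral Set

theorem integral_fluxCorrection_residual_eq {a b fl fr : ℝ} {F F' gm gp gm' gp' : ℝ → ℝ}
    (hF : ∀ x ∈ uIcc a b, HasDerivAt F (F' x) x)
    (hgm : ∀ x ∈ uIcc a b, HasDerivAt gm (gm' x) x)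
    (hgp : ∀ x ∈ uIcc a b, HasDerivAt gp (gp' x) x)
    (hF' : IntervalIntegrable F' MeasureTheory.volume a b)
    (hgm' : IntervalIntegrable gm' MeasureTheory.volume a b)
    (hgp' : IntervalIntegrable gp' MeasureTheory.volume a b)
    (hgm_l : gm a = 1) (hgm_r : gm b = 0) (hgp_l : gp a = 0) (hgp_r : gp b = 1) :
    ∫ x in a..b, (F' x + (fl - F a) * gm' x + (fr - F b) * gp' x) = fr - fl := by
  have hderiv : ∀ x ∈ uIcc a b,
      HasDerivAt (fun y => F y + (fl - F a) * gm y + (fr - F b) * gp y)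
        (F' x + (fl - F a) * gm' x + (fr - F b) * gp' x) x := fun x hx =>
    ((hF x hx).add ((hgm x hx).const_mul _)).add ((hgp x hx).const_mul _)
  have hint := (hF'.add (hgm'.const_mul (fl - F a))).add (hgp'.const_mul (fr - F b))
  rw [integral_eq_sub_of_hasDerivAt hderiv hint, hgm_l, hgm_r, hgp_l, hgp_r]
  ring

/-- Conservation of the semi-discrete FR scheme: over `N` cells, with `f i`
denoting the common flux `f_{i+1/2}` shared between cells `i` and `i+1`
(so `f 0 = f_{1/2}` and `f N = f_{N+1/2}`), the sum of the FR residual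
integrals telescopes to `f N - f 0`; in particular it vanishes under periodic
boundary conditions `f N = f 0`, so the total integral of the solution over
the whole domain is conserved. -/
theorem FR_conservation
    (N : ℕ) (f : ℕ → ℝ) (F F' : ℕ → ℝ → ℝ) (gm gp gm' gp' : ℝ → ℝ)
    (hF : ∀ i ∈ Finset.range N, ∀ x ∈ Set.uIcc (-1 : ℝ) 1,
        HasDerivAt (F i) (F' i x) x)
    (hF' : ∀ i ∈ Finset.range N, ContinuousOn (F' i) (Set.uIcc (-1 : ℝ) 1))
    (hgm : ∀ x ∈ Set.uIcc (-1 : ℝ) 1, HasDerivAt gm (gm' x) x)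
    (hgp : ∀ x ∈ Set.uIcc (-1 : ℝ) 1, HasDerivAt gp (gp' x) x)
    (hgm' : ContinuousOn gm' (Set.uIcc (-1 : ℝ) 1))
    (hgp' : ContinuousOn gp' (Set.uIcc (-1 : ℝ) 1))
    (hgm_l : gm (-1) = 1) (hgm_r : gm 1 = 0)
    (hgp_l : gp (-1) = 0) (hgp_r : gp 1 = 1) :
    (∑ i ∈ Finset.range N, ∫ ξ in (-1 : ℝ)..1,
        (F' i ξ + (f i - F i (-1)) * gm' ξ + (f (i + 1) - F i 1) * gp' ξ))
      = f N - f 0 ∧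
    (f N = f 0 →
      (∑ i ∈ Finset.range N, ∫ ξ in (-1 : ℝ)..1,
        (F' i ξ + (f i - F i (-1)) * gm' ξ + (f (i + 1) - F i 1) * gp' ξ)) = 0) := by
  have hcell : ∀ i ∈ Finset.range N,
      ∫ ξ in (-1 : ℝ)..1, (F' i ξ + (f i - F i (-1)) * gm' ξ + (f (i + 1) - F i 1) * gp' ξ)
        = f (i + 1) - f i := fun i hi =>
    integral_fluxCorrection_residual_eq (hF i hi) hgm hgp (hF' i hi).intervalIntegrable
      hgm'.intervalIntegrable hgp'.intervalIntegrable hgm_l hgm_r hgp_l hgp_r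
  have htelescope := (Finset.sum_congr rfl hcell).trans (Finset.sum_range_sub f N)
  exact ⟨htelescope, fun hper => htelescope.trans (sub_eq_zero.mpr hper)⟩
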